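/- For every n and K ⊆ [2, n+1], with τ_n(i) = n+3−i and J^max := J ∪ {n+2}: Σ_{J ⊆ [2,n+1]∖K} (−1)^{n−|K|+|J|} α(J^max)!̂ = Σ_{J ⊆ K} (−1)^{|K|−|J|} (|J|+2) α(τ_n(J))!̂. -/

import Mathlib

open Finset

/-- Positions of descents of a permutation of `Fin (n+1)` in one-line notation. -/
def descSet (n : ℕ) (σ : Equiv.Perm (Fin (n+1))) : Finset (Fin n) :=
  Finset.univ.filter (fun i : Fin n => σ i.succ < σ i.castSucc)

/-- Number of descents. -/
def des (n : ℕ) (σ : Equiv.Perm (Fin (n+1))) : ℕ := (descSet n σ).card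

/-- Descent top set, with values written 1-based (so `DT n σ ⊆ [2, n+1]`). -/
def DT (n : ℕ) (σ : Equiv.Perm (Fin (n+1))) : Finset ℕ :=
  (descSet n σ).image (fun i => (σ i.castSucc : ℕ) + 1)

/-- `β!̂ = (k+1)^{β₁} k^{β₂} ⋯ 2^{β_k}` for a tuple `β` of length `k`. -/
def hatFac (β : List ℕ) : ℕ :=
  (β.zipIdx.map (fun p => (β.length + 1 - p.2) ^ p.1)).prod

/-- `α(X)!̂` where, for `X = {x₁ < … < x_k}`, `α(X) = (x₁ - 1, x₂ - x₁, …, x_k - x_{k-1})`. -/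
def alphaHat (X : Finset ℕ) : ℕ :=
  hatFac (List.zipWith (fun a b => b - a) (1 :: X.sort (· ≤ ·)) (X.sort (· ≤ ·)))

/-!
For `X ⊆ [1, N]` the hat factorial of the gaps is a product of counts,
`α(X)!̂ = ∏_{t ∈ (1, N]} (1 + #{x ∈ X | t ≤ x})`, and the reflection `τ` turns the counts on the
right-hand side into `1 + #{j ∈ J | j ≤ s}`. Replacing the `1` on the left by a parameter `r`,
one shows
`r · L_N(r) = Σ_M ± C(r + |M|, |M| + 1) ∏_s (1 + #{j ∈ M | j ≤ s})`, where
`L_N(r) = Σ_J ± ∏_t (r + #{x ∈ J | t ≤ x})`, by induction on `N`, peeling off the top element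
`N + 1`. If it lies in `K`, both sides are multiplied by `r`; otherwise
`L_{N+1}(r) = (r + 1) L_N(r + 1) - r L_N(r)`, and Pascal's rule together with
`(m + 1) C(r + m, m + 1) = r C(r + m, m)` matches the right side. The theorem is the case `r = 2`,
because `α(J ∪ {n + 2})!̂ = 2 ∏_t (2 + #{x ∈ J | t ≤ x})` and `C(m + 2, m + 1) = m + 2`.
-/
lemma hatFac_cons (d : ℕ) (γ : List ℕ) : hatFac (d :: γ) = (γ.length + 2) ^ d * hatFac γ := by
  simp only [hatFac, List.zipIdx_cons', List.length_cons, List.map_cons, List.prod_cons,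
    List.map_map]
  congr 2
  refine List.map_congr_left fun p _ => ?_
  simp only [Function.comp_apply, Prod.map_fst, Prod.map_snd, id_eq]
  congr 1
  omega

lemma hatFac_zipWith_sub_eq_prod (N : ℕ) :
    ∀ (l : List ℕ) (a : ℕ), l.Pairwise (· ≤ ·) → (∀ x ∈ l, a ≤ x) → (∀ x ∈ l, x ≤ N) →
      hatFac (List.zipWith (fun u v => v - u) (a :: l) l) =
        ∏ t ∈ Ioc a N, (1 + (l.filter (fun x => t ≤ x)).length)
  | [], a, _, _, _ => by simp [hatFac]
  | x :: l, a, hs, ha, hN => by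
    obtain ⟨hxl, hl⟩ := List.pairwise_cons.mp hs
    have hax : a ≤ x := ha x List.mem_cons_self
    have hxN : x ≤ N := hN x List.mem_cons_self
    rw [List.zipWith_cons_cons, hatFac_cons, List.length_zipWith, List.length_cons,
      min_eq_right (Nat.le_succ _),
      hatFac_zipWith_sub_eq_prod N l x hl hxl fun y hy => hN y (List.mem_cons_of_mem _ hy),
      ← prod_Ioc_consecutive _ hax hxN]
    congr 1
    · rw [← Nat.card_Ioc, ← prod_const]
      refine prod_congr rfl fun t ht => ?_
      rw [List.filter_eq_self.mpr fun y hy => ?_]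
      · simp only [List.length_cons]; omega
      · rcases List.mem_cons.mp hy with rfl | hy
        · simpa using (mem_Ioc.mp ht).2
        · simpa using (mem_Ioc.mp ht).2.trans (hxl y hy)
    · refine prod_congr rfl fun t ht => ?_
      rw [List.filter_cons_of_neg (by simpa using (mem_Ioc.mp ht).1)]

lemma length_filter_sort (X : Finset ℕ) (p : ℕ → Prop) [DecidablePred p] :
    ((X.sort (· ≤ ·)).filter p).length = #{x ∈ X | p x} := by
  rw [card_def, filter_val, ← sort_eq X (· ≤ ·), Multiset.filter_coe, Multiset.coe_card]

def upperCountProd (r N : ℕ) (X : Finset ℕ) : ℕ :=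
  ∏ t ∈ Ioc 1 N, (r + #{x ∈ X | t ≤ x})

def lowerCountProd (N : ℕ) (X : Finset ℕ) : ℕ :=
  ∏ s ∈ Ioc 1 N, (1 + #{x ∈ X | x ≤ s})

lemma alphaHat_eq_upperCountProd {N : ℕ} {X : Finset ℕ} (hX : X ⊆ Icc 1 N) :
    alphaHat X = upperCountProd 1 N X := by
  have hbounds : ∀ x ∈ X.sort (· ≤ ·), 1 ≤ x ∧ x ≤ N := fun x hx =>
    mem_Icc.mp (hX ((mem_sort _).mp hx))
  rw [alphaHat, hatFac_zipWith_sub_eq_prod N _ 1 (pairwise_sort _ _)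
    (fun x hx => (hbounds x hx).1) (fun x hx => (hbounds x hx).2)]
  exact prod_congr rfl fun t _ => by rw [length_filter_sort]

lemma upperCountProd_succ {r N : ℕ} (hN : 1 ≤ N) {J : Finset ℕ} (hJ : ∀ x ∈ J, x ≤ N) :
    upperCountProd r (N + 1) J = r * upperCountProd r N J := by
  rw [upperCountProd, prod_Ioc_succ_top hN, filter_false_of_mem fun x hx => by
    have := hJ x hx; omega]
  simp [upperCountProd, mul_comm]

lemma upperCountProd_succ_insert {r N : ℕ} (hN : 1 ≤ N) {J : Finset ℕ} (hJ : ∀ x ∈ J, x ≤ N) :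
    upperCountProd r (N + 1) (insert (N + 1) J) = (r + 1) * upperCountProd (r + 1) N J := by
  have hnotMem : N + 1 ∉ J := fun h => by have := hJ _ h; omega
  rw [upperCountProd, prod_Ioc_succ_top hN, mul_comm, upperCountProd]
  congr 1
  · rw [filter_insert, if_pos le_rfl, filter_false_of_mem fun x hx => by have := hJ x hx; omega]
    simp
  · refine prod_congr rfl fun t ht => ?_
    rw [filter_insert, if_pos (by have := (mem_Ioc.mp ht).2; omega),
      card_insert_of_notMem fun h => hnotMem (mem_filter.mp h).1]
    ring

lemma upperCountProd_image_reflect {N : ℕ} {X : Finset ℕ} (hX : ∀ x ∈ X, x ≤ N + 2) :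
    upperCountProd 1 N (X.image (N + 2 - ·)) = lowerCountProd N X := by
  have hmaps : ∀ t ∈ Ioc 1 N, N + 2 - t ∈ Ioc 1 N := fun t ht => by
    simp only [mem_Ioc] at ht ⊢; omega
  have hinvol : ∀ t ∈ Ioc 1 N, N + 2 - (N + 2 - t) = t := fun t ht => by
    have := mem_Ioc.mp ht; omega
  refine prod_nbij' (N + 2 - ·) (N + 2 - ·) hmaps hmaps hinvol hinvol fun t ht => ?_
  have hinj : Set.InjOn (N + 2 - ·) (X.filter (fun x => t ≤ N + 2 - x) : Set ℕ) :=
    fun a ha b hb h => by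
      have := hX a (mem_filter.mp ha).1; have := hX b (mem_filter.mp hb).1
      simp only at h; omega
  rw [filter_image, card_image_of_injOn hinj]
  congr 2
  refine filter_congr fun x _ => ?_
  have := mem_Ioc.mp ht
  omega

lemma lowerCountProd_succ {N : ℕ} (hN : 1 ≤ N) {M : Finset ℕ} (hM : ∀ x ∈ M, x ≤ N + 1) :
    lowerCountProd (N + 1) M = (#M + 1) * lowerCountProd N M := by
  rw [lowerCountProd, prod_Ioc_succ_top hN, mul_comm, filter_true_of_mem hM, add_comm]
  rfl

lemma lowerCountProd_insert_of_lt {N a : ℕ} (ha : N < a) (M : Finset ℕ) :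
    lowerCountProd N (insert a M) = lowerCountProd N M := by
  refine prod_congr rfl fun s hs => ?_
  rw [filter_insert, if_neg (by have := (mem_Ioc.mp hs).2; omega)]

lemma alphaHat_insert_succ {N : ℕ} (hN : 1 ≤ N) {J : Finset ℕ} (hJ : J ⊆ Icc 1 N) :
    alphaHat (insert (N + 1) J) = 2 * upperCountProd 2 N J := by
  have hJN : ∀ x ∈ J, x ≤ N := fun x hx => (mem_Icc.mp (hJ hx)).2
  rw [alphaHat_eq_upperCountProd (N := N + 1), upperCountProd_succ_insert hN hJN]
  exact insert_subset (mem_Icc.mpr ⟨by omega, le_rfl⟩)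
    (hJ.trans (Icc_subset_Icc_right N.le_succ))

lemma alphaHat_image_reflect {N : ℕ} {X : Finset ℕ} (hX : X ⊆ Icc 2 N) :
    alphaHat (X.image (N + 2 - ·)) = lowerCountProd N X := by
  rw [alphaHat_eq_upperCountProd (N := N), upperCountProd_image_reflect]
  · exact fun x hx => by have := mem_Icc.mp (hX hx); omega
  · intro y hy
    obtain ⟨x, hx, rfl⟩ := mem_image.mp hy
    have := mem_Icc.mp (hX hx)
    simp only [mem_Icc]; omega

def altUpperSum (r N : ℕ) (K : Finset ℕ) : ℤ :=
  ∑ J ∈ (Icc 2 N \ K).powerset, (-1) ^ (#(Icc 2 N \ K) + #J) * (upperCountProd r N J : ℤ)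

def altLowerSum (r N : ℕ) (K : Finset ℕ) : ℤ :=
  ∑ M ∈ K.powerset, (-1) ^ (#K - #M) * ((r + #M).choose (#M + 1) : ℤ) * lowerCountProd N M

lemma le_of_mem_powerset_sdiff {N : ℕ} {K J : Finset ℕ} (hJ : J ∈ (Icc 2 N \ K).powerset) :
    ∀ x ∈ J, x ≤ N :=
  fun _ hx => (mem_Icc.mp (mem_sdiff.mp (mem_powerset.mp hJ hx)).1).2

lemma altUpperSum_succ_insert {r N : ℕ} (hN : 1 ≤ N) (K : Finset ℕ) :
    altUpperSum r (N + 1) (insert (N + 1) K) = r * altUpperSum r N K := by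
  have hS : Icc 2 (N + 1) \ insert (N + 1) K = Icc 2 N \ K := by
    ext x; simp only [mem_sdiff, mem_Icc, mem_insert]; grind
  rw [altUpperSum, altUpperSum, hS, mul_sum]
  refine sum_congr rfl fun J hJ => ?_
  rw [upperCountProd_succ hN (le_of_mem_powerset_sdiff hJ)]
  push_cast; ring

lemma altUpperSum_succ_of_notMem {r N : ℕ} (hN : 1 ≤ N) {K : Finset ℕ} (hK : N + 1 ∉ K) :
    altUpperSum r (N + 1) K = (r + 1) * altUpperSum (r + 1) N K - r * altUpperSum r N K := by
  have hS : Icc 2 (N + 1) \ K = insert (N + 1) (Icc 2 N \ K) := by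
    ext x; simp only [mem_sdiff, mem_Icc, mem_insert]; grind
  have hnotMem : N + 1 ∉ Icc 2 N \ K := by simp
  rw [altUpperSum, hS, sum_powerset_insert hnotMem, card_insert_of_notMem hnotMem, altUpperSum,
    altUpperSum, mul_sum, mul_sum, sub_eq_add_neg, ← sum_neg_distrib, add_comm]
  congr 1 <;> refine sum_congr rfl fun J hJ => ?_
  · have hJN := le_of_mem_powerset_sdiff hJ
    rw [upperCountProd_succ_insert hN hJN, card_insert_of_notMem fun h => by
      have := hJN _ h; omega]
    push_cast; ring
  · rw [upperCountProd_succ hN (le_of_mem_powerset_sdiff hJ)]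
    push_cast; ring

lemma altLowerSum_succ_insert {r N : ℕ} (hN : 1 ≤ N) {K : Finset ℕ} (hK : ∀ x ∈ K, x ≤ N) :
    altLowerSum r (N + 1) (insert (N + 1) K) = r * altLowerSum r N K := by
  have hnotMem : N + 1 ∉ K := fun h => by have := hK _ h; omega
  rw [altLowerSum, sum_powerset_insert hnotMem, altLowerSum, mul_sum, ← sum_add_distrib,
    card_insert_of_notMem hnotMem]
  refine sum_congr rfl fun M hM => ?_
  have hMK := mem_powerset.mp hM
  have hMN : ∀ x ∈ M, x ≤ N := fun x hx => hK x (hMK hx)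
  have hnotMemM : N + 1 ∉ M := fun h => hnotMem (hMK h)
  have hcard : #M ≤ #K := card_le_card hMK
  rw [card_insert_of_notMem hnotMemM,
    lowerCountProd_succ hN fun x hx => (hMN x hx).trans N.le_succ,
    lowerCountProd_succ hN fun x hx => (mem_insert.mp hx).elim le_of_eq fun hx =>
      (hMN x hx).trans N.le_succ,
    lowerCountProd_insert_of_lt (Nat.lt_succ_self N), card_insert_of_notMem hnotMemM,
    show #K + 1 - #M = #K - #M + 1 by omega, show #K + 1 - (#M + 1) = #K - #M by omega]
  have hchoose : ((r + #M + 1).choose (#M + 1 + 1) * (#M + 1 + 1) : ℤ) =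
      (r + #M + 1) * (r + #M).choose (#M + 1) := by
    exact_mod_cast (Nat.add_one_mul_choose_eq (r + #M) (#M + 1)).symm
  rw [show r + (#M + 1) = r + #M + 1 by ring]
  push_cast at hchoose ⊢
  linear_combination (-1 : ℤ) ^ (#K - #M) * (lowerCountProd N M : ℤ) * hchoose

lemma altLowerSum_succ {r N : ℕ} (hN : 1 ≤ N) {K : Finset ℕ} (hK : ∀ x ∈ K, x ≤ N + 1) :
    altLowerSum r (N + 1) K = r * (altLowerSum (r + 1) N K - altLowerSum r N K) := by
  rw [altLowerSum, altLowerSum, altLowerSum, ← sum_sub_distrib, mul_sum]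
  refine sum_congr rfl fun M hM => ?_
  rw [lowerCountProd_succ hN fun x hx => hK x (mem_powerset.mp hM hx)]
  have hpascal : ((r + 1 + #M).choose (#M + 1) : ℤ) =
      (r + #M).choose #M + (r + #M).choose (#M + 1) := by
    rw [show r + 1 + #M = r + #M + 1 by ring]
    exact_mod_cast Nat.choose_succ_succ (r + #M) #M
  have habsorb : ((r + #M).choose (#M + 1) * (#M + 1) : ℤ) = (r + #M).choose #M * r := by
    have := Nat.choose_succ_right_eq (r + #M) #M
    rw [Nat.add_sub_cancel] at this
    exact_mod_cast this
  push_cast at hpascal ⊢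
  linear_combination (-1 : ℤ) ^ (#K - #M) * (lowerCountProd N M : ℤ) * (habsorb - r * hpascal)

theorem mul_altUpperSum_eq_altLowerSum {N : ℕ} (hN : 1 ≤ N) (r : ℕ) {K : Finset ℕ}
    (hK : K ⊆ Icc 2 N) : r * altUpperSum r N K = altLowerSum r N K := by
  induction N, hN using Nat.le_induction generalizing r K with
  | base =>
    obtain rfl : K = ∅ := subset_empty.mp (by simpa using hK)
    simp [altUpperSum, altLowerSum, upperCountProd, lowerCountProd]
  | succ N hN ih =>
    by_cases hmem : N + 1 ∈ K
    · have hK₀ : K.erase (N + 1) ⊆ Icc 2 N := fun x hx => by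
        have := mem_Icc.mp (hK (mem_of_mem_erase hx))
        have := ne_of_mem_erase hx
        exact mem_Icc.mpr ⟨by omega, by omega⟩
      rw [← insert_erase hmem, altUpperSum_succ_insert hN, ← mul_assoc, mul_comm _ (r : ℤ),
        mul_assoc, ih r hK₀, altLowerSum_succ_insert hN fun x hx => (mem_Icc.mp (hK₀ hx)).2]
    · have hK' : K ⊆ Icc 2 N := fun x hx => by
        have := mem_Icc.mp (hK hx)
        have : x ≠ N + 1 := fun h => hmem (h ▸ hx)
        exact mem_Icc.mpr ⟨by omega, by omega⟩
      rw [altUpperSum_succ_of_notMem hN hmem,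
        altLowerSum_succ hN fun x hx => (mem_Icc.mp (hK hx)).2, ← ih r hK', ← ih (r + 1) hK']
      push_cast
      ring

/-- Reordered sums, with `τ_n(i) = n+3-i` and `J^max = J ∪ {n+2}`. -/
theorem reordering_sums (n : ℕ) (K : Finset ℕ) (hK : K ⊆ Finset.Icc 2 (n+1)) :
    ∑ J ∈ (Finset.Icc 2 (n+1) \ K).powerset,
        (-1 : ℤ) ^ (n - K.card + J.card) * alphaHat (insert (n+2) J) =
      ∑ J ∈ K.powerset,
        (-1 : ℤ) ^ (K.card - J.card) * (J.card + 2) *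
          alphaHat (J.image (fun j => n + 3 - j)) := by
  have hcard : #(Icc 2 (n + 1) \ K) = n - #K := by
    rw [card_sdiff_of_subset hK, Nat.card_Icc]; rfl
  calc _ = 2 * altUpperSum 2 (n + 1) K := by
        rw [altUpperSum, hcard, mul_sum]
        refine sum_congr rfl fun J hJ => ?_
        rw [alphaHat_insert_succ (by omega)
          ((mem_powerset.mp hJ).trans (sdiff_subset.trans (Icc_subset_Icc_left (by norm_num))))]
        push_cast; ring
    _ = altLowerSum 2 (n + 1) K := by
        exact_mod_cast mul_altUpperSum_eq_altLowerSum (by omega) 2 hK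
    _ = _ := by
        refine sum_congr rfl fun J hJ => ?_
        rw [add_comm 2, Nat.choose_succ_self_right (#J + 1),
          alphaHat_image_reflect ((mem_powerset.mp hJ).trans hK)]
        push_cast; ring
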